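/- arXiv:1201.2267 — 3 statements merged into one kernel-verified Lean document; each statement's English description precedes it below -/
import Mathlib

section
/- Suppose A ∈ ℕ is such that every set of n points in ℝ² in general position admits a k-partition with crossing number at most A. Let v₁,…,v_m be points in ℝ² with strictly increasing x-coordinates forming a downward-convex chain (for all i < j < l, v_j lies strictly above the segment from v_i to v_l), and let L be a set of n non-vertical lines, none passing through any v_j, such that the points of ℝ² dual to the lines of L are in general position and such that for each vertex v_j the conflict set L_{v_j} (the set of lines of L lying strictly below v_j) has cardinality exactly k. Then there exists a coloring of the lines of L such that (i) each color class has size at most k, and (ii) each conflict set L_{v_j} contains at most A + 1 distinct colors. -/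
/-!
Reflect the dual points of `L` through the origin. A line lies strictly below `v j` exactly when
its reflected dual point lies strictly below the line `y = 2 (v j).1 x + (v j).2`, so that line is
`k`-shallow for the reflected point set `P`, and general position of `P` follows from that of the
dual points. Colour each line by the part of a `k`-partition of `P` containing its reflected dual.
A part meeting the region below a shallow line either crosses the line or lies entirely below it,
and at most one part can lie entirely below: two would be disjoint and non-empty inside a set of
at most `k` points, so neither would be full, while only the last part may be non-full.
-/

open scoped Classical

noncomputable section

/-- A planar point set is in general position if no three distinct points are collinear. -/
def GenPos2 (P : Finset (ℝ × ℝ)) : Prop :=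
  ∀ p ∈ P, ∀ q ∈ P, ∀ r ∈ P, p ≠ q → q ≠ r → p ≠ r →
    ¬ Collinear ℝ ({p, q, r} : Set (ℝ × ℝ))

/-- The triangle (convex hull) spanned by three points. -/
def triangle (t : Fin 3 → ℝ × ℝ) : Set (ℝ × ℝ) :=
  convexHull ℝ {t 0, t 1, t 2}

/-- The non-vertical line `y = a*x + b`, as a set of points. -/
def lineSet (a b : ℝ) : Set (ℝ × ℝ) := {p | p.2 = a * p.1 + b}

/-- The open halfplane strictly below the line `y = a*x + b`. -/
def belowSet (a b : ℝ) : Set (ℝ × ℝ) := {p | p.2 < a * p.1 + b}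

/-- A `k`-partition of an `n`-point set `P` : pairwise disjoint parts
`P_1, …, P_⌈n/k⌉` covering `P`, where the first `⌊n/k⌋` parts have size
exactly `k`, together with triangles containing the parts.
(Here `⌈n/k⌉ = (n + k - 1) / k` in natural-number arithmetic, and the
parts are indexed by `i = 0, …, ⌈n/k⌉ - 1`, the first `⌊n/k⌋ = n / k`
of them having size `k`.) -/
structure IsKPartition (P : Finset (ℝ × ℝ)) (n k : ℕ)
    (parts : Fin ((n + k - 1) / k) → Finset (ℝ × ℝ))
    (tri : Fin ((n + k - 1) / k) → Fin 3 → ℝ × ℝ) : Prop where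
  disjoint : ∀ i j, i ≠ j → Disjoint (parts i) (parts j)
  cover : Finset.univ.biUnion parts = P
  size : ∀ i : Fin ((n + k - 1) / k), (i : ℕ) < n / k → (parts i).card = k
  inTriangle : ∀ i, ↑(parts i) ⊆ triangle (tri i)

/-- The line `y = a*x + b` is `k`-shallow for `P` : it contains no point of `P`
and at most `k` points of `P` lie strictly below it. -/
def IsShallow (P : Finset (ℝ × ℝ)) (k : ℕ) (a b : ℝ) : Prop :=
  (∀ p ∈ P, p ∉ lineSet a b) ∧ (P.filter (fun p => p ∈ belowSet a b)).card ≤ k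

/-- The number of triangles of the partition that the line `y = a*x + b` intersects. -/
def crossCount {N : ℕ} (tri : Fin N → Fin 3 → ℝ × ℝ) (a b : ℝ) : ℕ :=
  (Finset.univ.filter fun i => (lineSet a b ∩ triangle (tri i)).Nonempty).card

/-- The duality transform: the non-vertical line `y = a*x + b` maps to the
point `(a/2, -b)` (and the point `(p_x, p_y)` maps to the line
`y = 2*p_x*x - p_y`). -/
def dualPoint (l : ℝ × ℝ) : ℝ × ℝ := (l.1 / 2, -l.2)

universe u

theorem Collinear.image {k P₁ P₂ : Type*} {V₁ V₂ : Type u} [DivisionRing k] [AddCommGroup V₁]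
    [Module k V₁] [AddTorsor V₁ P₁] [AddCommGroup V₂] [Module k V₂] [AddTorsor V₂ P₂] {s : Set P₁}
    (h : Collinear k s) (f : P₁ →ᵃ[k] P₂) : Collinear k (f '' s) := by
  rw [Collinear, ← f.map_vectorSpan]
  exact (rank_map_le _ _).trans h

theorem GenPos2.image_affineEquiv {P : Finset (ℝ × ℝ)} (h : GenPos2 P)
    (e : (ℝ × ℝ) ≃ᵃ[ℝ] ℝ × ℝ) : GenPos2 (P.image e) := by
  simp only [GenPos2, Finset.mem_image, forall_exists_index, and_imp]
  rintro _ p hp rfl _ q hq rfl _ r hr rfl hpq hqr hpr hcol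
  refine h p hp q hq r hr (ne_of_apply_ne e hpq) (ne_of_apply_ne e hqr) (ne_of_apply_ne e hpr) ?_
  simpa [Set.image_insert_eq] using hcol.image e.symm.toAffineMap

theorem Convex.inter_lineSet_nonempty {s : Set (ℝ × ℝ)} (hs : Convex ℝ s) {a b : ℝ}
    {p q : ℝ × ℝ} (hp : p ∈ s) (hq : q ∈ s) (hp_le : p.2 ≤ a * p.1 + b)
    (hq_ge : a * q.1 + b ≤ q.2) : (lineSet a b ∩ s).Nonempty := by
  obtain ⟨x, hxs, hx⟩ := hs.isPreconnected.intermediate_value hp hq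
    (f := fun x : ℝ × ℝ => x.2 - (a * x.1 + b)) (by fun_prop)
    (show (0 : ℝ) ∈ Set.Icc (p.2 - (a * p.1 + b)) (q.2 - (a * q.1 + b)) by
      constructor <;> linarith)
  exact ⟨x, show x.2 = a * x.1 + b by beta_reduce at hx; linarith, hxs⟩

namespace IsKPartition

variable {P : Finset (ℝ × ℝ)} {n k : ℕ} {parts : Fin ((n + k - 1) / k) → Finset (ℝ × ℝ)}
  {tri : Fin ((n + k - 1) / k) → Fin 3 → ℝ × ℝ}

theorem exists_mem {p : ℝ × ℝ} (h : IsKPartition P n k parts tri) (hp : p ∈ P) :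
    ∃ i, p ∈ parts i := by
  simpa [← h.cover] using hp

theorem mem_of_mem_part {p : ℝ × ℝ} {i} (h : IsKPartition P n k parts tri)
    (hp : p ∈ parts i) : p ∈ P :=
  h.cover ▸ Finset.mem_biUnion.2 ⟨i, Finset.mem_univ _, hp⟩

theorem sum_card (h : IsKPartition P n k parts tri) : ∑ i, (parts i).card = P.card := by
  rw [← Finset.card_biUnion fun i _ j _ hij => h.disjoint i j hij, h.cover]

theorem val_eq_of_card_ne (h : IsKPartition P n k parts tri) {i} (hi : (parts i).card ≠ k) :
    (i : ℕ) = n / k := by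
  have hk : 0 < k := (Nat.div_pos_iff.1 (Nat.zero_lt_of_lt i.2)).1
  have hlt : (i : ℕ) < n / k + 1 := calc
    (i : ℕ) < (n + k - 1) / k := i.2
    _ ≤ (n + k) / k := Nat.div_le_div_right (Nat.sub_le _ _)
    _ = n / k + 1 := Nat.add_div_right n hk
  have : ¬ (i : ℕ) < n / k := fun hlt' => hi (h.size i hlt')
  omega

theorem card_le (h : IsKPartition P n k parts tri) (hP : P.card = n) (i) :
    (parts i).card ≤ k := by
  by_cases hi : (parts i).card = k
  · exact hi.le
  have hik := h.val_eq_of_card_ne hi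
  set full := Finset.univ.filter fun j : Fin ((n + k - 1) / k) => (j : ℕ) < n / k
  have hfull : ∑ j ∈ full, (parts j).card = n / k * k := by
    rw [Finset.sum_congr rfl fun j hj => h.size j (Finset.mem_filter.1 hj).2,
      Finset.sum_const, smul_eq_mul, Fin.card_filter_val_lt, min_eq_right (by omega)]
  have hsum : (parts i).card + n / k * k ≤ P.card := by
    rw [← hfull, ← Finset.sum_insert (f := fun j => (parts j).card) (by simp [full, hik]),
      ← h.sum_card]
    exact Finset.sum_le_sum_of_subset (Finset.subset_univ _)
  have := Nat.div_add_mod' n k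
  have := Nat.mod_lt n (Nat.div_pos_iff.1 (Nat.zero_lt_of_lt i.2)).1
  linarith

theorem subset_filter_belowSet {a b : ℝ} (h : IsKPartition P n k parts tri)
    (hsh : IsShallow P k a b) {i} (hcross : ¬ (lineSet a b ∩ triangle (tri i)).Nonempty)
    {q : ℝ × ℝ} (hq : q ∈ parts i) (hqb : q ∈ belowSet a b) :
    parts i ⊆ P.filter (· ∈ belowSet a b) := by
  intro p hp
  have hpP := h.mem_of_mem_part hp
  refine Finset.mem_filter.2 ⟨hpP, ?_⟩
  by_contra hpb
  have hpl := hsh.1 p hpP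
  simp only [belowSet, lineSet, Set.mem_ofPred_eq, not_lt] at hpb hpl hqb
  exact hcross <| (convex_convexHull ℝ _).inter_lineSet_nonempty (h.inTriangle i hq)
    (h.inTriangle i hp) hqb.le (lt_of_le_of_ne hpb (Ne.symm hpl)).le

theorem card_filter_meets_belowSet_le {a b : ℝ} (h : IsKPartition P n k parts tri)
    (hsh : IsShallow P k a b) :
    (Finset.univ.filter fun i => ∃ p ∈ parts i, p ∈ belowSet a b).card
      ≤ crossCount tri a b + 1 := by
  set D := Finset.univ.filter fun i => ∃ p ∈ parts i, p ∈ belowSet a b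
  set C := Finset.univ.filter fun i => (lineSet a b ∩ triangle (tri i)).Nonempty
  have hbelow : ∀ i ∈ D \ C, 0 < (parts i).card ∧ parts i ⊆ P.filter (· ∈ belowSet a b) := by
    intro i hi
    obtain ⟨hiD, hiC⟩ := Finset.mem_sdiff.1 hi
    obtain ⟨q, hq, hqb⟩ := (Finset.mem_filter.1 hiD).2
    exact ⟨Finset.card_pos.2 ⟨q, hq⟩,
      h.subset_filter_belowSet hsh (fun hc => hiC (by simp [C, hc])) hq hqb⟩
  have hDC : (D \ C).card ≤ 1 := by
    refine Finset.card_le_one.2 fun i hi j hj => by_contra fun hij => ?_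
    obtain ⟨hi_pos, hi_sub⟩ := hbelow i hi
    obtain ⟨hj_pos, hj_sub⟩ := hbelow j hj
    have hsum : (parts i).card + (parts j).card ≤ k := by
      rw [← Finset.card_union_of_disjoint (h.disjoint i j hij)]
      exact (Finset.card_le_card (Finset.union_subset hi_sub hj_sub)).trans hsh.2
    exact hij <| Fin.ext <| (h.val_eq_of_card_ne (by omega)).trans
      (h.val_eq_of_card_ne (by omega)).symm
  calc D.card ≤ (C ∪ D \ C).card := Finset.card_le_card (by simp)
    _ ≤ C.card + (D \ C).card := Finset.card_union_le _ _
    _ ≤ crossCount tri a b + 1 := Nat.add_le_add le_rfl hDC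

end IsKPartition

section Coloring

variable {α β : Type*} {N : ℕ} {f : α → β} {L : Finset α} {parts : Fin N → Finset β}
  {χ : α → ℕ}

theorem exists_coloring_of_forall_exists_mem (hcover : ∀ l ∈ L, ∃ i, f l ∈ parts i) :
    ∃ χ : α → ℕ, ∀ l ∈ L, ∃ i : Fin N, (i : ℕ) = χ l ∧ f l ∈ parts i := by
  choose idx hidx using hcover
  exact ⟨fun l => if hl : l ∈ L then idx l hl else 0,
    fun l hl => ⟨idx l hl, by simp [hl], hidx l hl⟩⟩

theorem card_filter_color_eq_le {k : ℕ} (hf : Function.Injective f)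
    (hk : ∀ i, (parts i).card ≤ k) (hχ : ∀ l ∈ L, ∃ i : Fin N, (i : ℕ) = χ l ∧ f l ∈ parts i)
    (c : ℕ) : (L.filter fun l => χ l = c).card ≤ k := by
  rcases (L.filter fun l => χ l = c).eq_empty_or_nonempty with hempty | ⟨l₀, hl₀⟩
  · simp [hempty]
  obtain ⟨hl₀L, rfl⟩ := Finset.mem_filter.1 hl₀
  obtain ⟨i₀, hi₀, -⟩ := hχ l₀ hl₀L
  refine le_trans (Finset.card_le_card_of_injOn f (fun l hl => ?_) hf.injOn) (hk i₀)
  obtain ⟨hlL, hlc⟩ := Finset.mem_filter.1 hl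
  obtain ⟨i, hi, hfl⟩ := hχ l hlL
  rwa [Fin.ext (hi.trans (hlc.trans hi₀.symm))] at hfl

theorem card_image_color_le {S : Finset α} (hS : S ⊆ L) {s : Set β} (hSs : ∀ l ∈ S, f l ∈ s)
    (hχ : ∀ l ∈ L, ∃ i : Fin N, (i : ℕ) = χ l ∧ f l ∈ parts i) :
    (S.image χ).card ≤ (Finset.univ.filter fun i => ∃ p ∈ parts i, p ∈ s).card := by
  refine (Finset.card_le_card fun c hc => ?_).trans
    (Finset.card_image_le (f := fun i : Fin N => (i : ℕ)))
  obtain ⟨l, hl, rfl⟩ := Finset.mem_image.1 hc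
  obtain ⟨i, hi, hfl⟩ := hχ l (hS hl)
  exact Finset.mem_image.2 ⟨i, by simpa using ⟨f l, hfl, hSs l hl⟩, hi⟩

end Coloring

def reflectedDual (l : ℝ × ℝ) : ℝ × ℝ := -dualPoint l

theorem reflectedDual_injective : Function.Injective reflectedDual := by
  intro l l' h
  simp only [reflectedDual, dualPoint, neg_inj, Prod.mk.injEq] at h
  exact Prod.ext (by linarith [h.1]) (by linarith [h.2])

theorem reflectedDual_mem_belowSet_iff (l v : ℝ × ℝ) :
    reflectedDual l ∈ belowSet (2 * v.1) v.2 ↔ l.1 * v.1 + l.2 < v.2 := by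
  simp only [reflectedDual, dualPoint, belowSet, Set.mem_ofPred_eq, Prod.snd_neg, Prod.fst_neg]
  constructor <;> intro h <;> linarith

theorem reflectedDual_mem_lineSet_iff (l v : ℝ × ℝ) :
    reflectedDual l ∈ lineSet (2 * v.1) v.2 ↔ v.2 = l.1 * v.1 + l.2 := by
  simp only [reflectedDual, dualPoint, lineSet, Set.mem_ofPred_eq, Prod.snd_neg, Prod.fst_neg]
  constructor <;> intro h <;> linarith

theorem statement2_general (n k A : ℕ)
    (hA : ∀ P : Finset (ℝ × ℝ), P.card = n → GenPos2 P →
      ∃ (parts : Fin ((n + k - 1) / k) → Finset (ℝ × ℝ))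
        (tri : Fin ((n + k - 1) / k) → Fin 3 → ℝ × ℝ),
        IsKPartition P n k parts tri ∧
          ∀ a b : ℝ, IsShallow P k a b → crossCount tri a b ≤ A)
    (m : ℕ) (v : Fin m → ℝ × ℝ)
    (L : Finset (ℝ × ℝ)) (hL : L.card = n)
    (hmiss : ∀ l ∈ L, ∀ j : Fin m, (v j).2 ≠ l.1 * (v j).1 + l.2)
    (hgp : GenPos2 (L.image dualPoint))
    (hconf : ∀ j : Fin m,
      (L.filter fun l => l.1 * (v j).1 + l.2 < (v j).2).card = k) :
    ∃ χ : ℝ × ℝ → ℕ,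
      (∀ c : ℕ, (L.filter fun l => χ l = c).card ≤ k) ∧
      (∀ j : Fin m,
        ((L.filter fun l => l.1 * (v j).1 + l.2 < (v j).2).image χ).card
          ≤ A + 1) := by
  set P := L.image reflectedDual
  have hPcard : P.card = n := by rw [Finset.card_image_of_injective _ reflectedDual_injective, hL]
  have hPgp : GenPos2 P := by
    have := hgp.image_affineEquiv (LinearEquiv.neg ℝ).toAffineEquiv
    rwa [Finset.image_image] at this
  obtain ⟨parts, tri, hpart, hcross⟩ := hA P hPcard hPgp
  obtain ⟨χ, hχ⟩ := exists_coloring_of_forall_exists_mem (f := reflectedDual)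
    fun l hl => hpart.exists_mem (Finset.mem_image_of_mem _ hl)
  refine ⟨χ, card_filter_color_eq_le reflectedDual_injective (hpart.card_le hPcard) hχ,
    fun j => ?_⟩
  have hshallow : IsShallow P k (2 * (v j).1) (v j).2 := by
    refine ⟨?_, ?_⟩
    · simp only [P, Finset.mem_image, forall_exists_index, and_imp]
      rintro _ l hl rfl
      exact (reflectedDual_mem_lineSet_iff l (v j)).not.2 (hmiss l hl j)
    · rw [Finset.filter_image, Finset.card_image_of_injective _ reflectedDual_injective]
      simp only [reflectedDual_mem_belowSet_iff, hconf j, le_rfl]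
  calc _ ≤ _ := card_image_color_le (Finset.filter_subset _ L)
        (fun l hl => (reflectedDual_mem_belowSet_iff l (v j)).2 (Finset.mem_filter.1 hl).2) hχ
    _ ≤ crossCount tri _ _ + 1 := hpart.card_filter_meets_belowSet_le hshallow
    _ ≤ A + 1 := Nat.add_le_add_right (hcross _ _ hshallow) 1

/-- dual interpretation of shallow partitions.
Suppose `A` is such that every `n`-point set in general position admits a
`k`-partition with crossing number at most `A`.  Let `v 0, …, v (m-1)` be
points with strictly increasing `x`-coordinates forming a downward-convex
chain (each `v j` with `i < j < l` lies strictly above the segment from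
`v i` to `v l`), and let `L` be a set of `n` non-vertical lines
(a line being encoded by its pair of coefficients `(a, b)` for `y = a*x+b`),
none passing through any `v j`, whose dual points are in general position,
such that each conflict set (lines of `L` strictly below `v j`) has exactly
`k` elements.  Then `L` can be colored so that each color class has at most
`k` lines and each conflict set contains at most `A + 1` distinct colors. -/
theorem statement2 (n k A : ℕ)
    (hA : ∀ P : Finset (ℝ × ℝ), P.card = n → GenPos2 P →
      ∃ (parts : Fin ((n + k - 1) / k) → Finset (ℝ × ℝ))
        (tri : Fin ((n + k - 1) / k) → Fin 3 → ℝ × ℝ),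
        IsKPartition P n k parts tri ∧
          ∀ a b : ℝ, IsShallow P k a b → crossCount tri a b ≤ A)
    (m : ℕ) (v : Fin m → ℝ × ℝ)
    (hx : ∀ i j : Fin m, i < j → (v i).1 < (v j).1)
    (hconv : ∀ i j l : Fin m, i < j → j < l →
      ((v j).2 - (v i).2) * ((v l).1 - (v i).1) >
        ((v l).2 - (v i).2) * ((v j).1 - (v i).1))
    (L : Finset (ℝ × ℝ)) (hL : L.card = n)
    (hmiss : ∀ l ∈ L, ∀ j : Fin m, (v j).2 ≠ l.1 * (v j).1 + l.2)
    (hgp : GenPos2 (L.image dualPoint))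
    (hconf : ∀ j : Fin m,
      (L.filter fun l => l.1 * (v j).1 + l.2 < (v j).2).card = k) :
    ∃ χ : ℝ × ℝ → ℕ,
      (∀ c : ℕ, (L.filter fun l => χ l = c).card ≤ k) ∧
      (∀ j : Fin m,
        ((L.filter fun l => l.1 * (v j).1 + l.2 < (v j).2).image χ).card
          ≤ A + 1) :=
  statement2_general n k A hA m v L hL hmiss hgp hconf

end
end

section
/- Let T be the complete binary tree of height β with a multi-coloring of its nodes, and suppose the levels 0,…,β of T are partitioned into b consecutive blocks (slices) S₁,…,S_b from top to bottom. Suppose that for every i ∈ {1,…,b−1} and every node z in the top level of slice S_i, the set of descendants of z lying within slice S_i (a complete subtree with root z whose leaves are at the bottom level of S_i) carries at least i distinct colors. Then there exists a root-leaf path of T along which at least b − 1 distinct colors appear. -/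
open scoped Classical

/-- The nodes of the complete binary tree of height `β`, in heap indexing:
the `2^(β+1) - 1` numbers `1, …, 2^(β+1) - 1`.  The root is `1`, the children
of node `v` are `2*v` and `2*v + 1`, and the level of node `v` is `log₂ v`. -/
def treeNodes (β : ℕ) : Finset ℕ := Finset.Ico 1 (2 ^ (β + 1))

/-- The leaves of the complete binary tree of height `β`: the `2^β` nodes on
level `β`. -/
def treeLeaves (β : ℕ) : Finset ℕ := Finset.Ico (2 ^ β) (2 ^ (β + 1))

/-- Given a multi-coloring `c` of the nodes (each node gets a multiset of
colors) and a leaf `l`, the set of distinct colors appearing along the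
root-leaf path to `l`; the path consists of the ancestors `l / 2^t` of `l`. -/
def pathColors (β : ℕ) (c : ℕ → Multiset ℕ) (l : ℕ) : Finset ℕ :=
  (Finset.range (β + 1)).biUnion fun t => (c (l / 2 ^ t)).toFinset

/-!
Walk down the tree one slice at a time, keeping a node `z` on the top level of the current slice
whose root path already carries `i` colors. If it carries `i + 1` colors, any descendant of `z` on
the top level of the next slice will do. Otherwise the subtree of `z` inside slice `i + 1`, which
carries at least `i + 1` colors, contains a node `w` with a color missing from the root path of
`z`; the root path of `w`, hence of any descendant of `w`, then carries `i + 1` colors.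
-/

theorem Nat.log_mul_pow {b n : ℕ} (hb : 1 < b) (hn : n ≠ 0) (k : ℕ) :
    Nat.log b (n * b ^ k) = Nat.log b n + k := by
  induction k with
  | zero => simp
  | succ k ih =>
    rw [pow_succ, ← Nat.mul_assoc, Nat.log_mul_base hb (by positivity), ih, Nat.add_assoc]

lemma mem_treeNodes_of_log_le {β z : ℕ} (hz : z ≠ 0) (h : Nat.log 2 z ≤ β) :
    z ∈ treeNodes β := by
  have := Nat.lt_pow_succ_log_self one_lt_two z
  have := Nat.pow_le_pow_right two_pos (Nat.succ_le_succ h)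
  simp only [treeNodes, Finset.mem_Ico]
  omega

lemma mem_treeLeaves_of_log_eq {β l : ℕ} (hl : l ≠ 0) (h : Nat.log 2 l = β) :
    l ∈ treeLeaves β :=
  Finset.mem_Ico.2 ((Nat.log_eq_iff (Or.inr ⟨one_lt_two, hl⟩)).1 h)

def ancestorColors (col : ℕ → Multiset ℕ) (z : ℕ) : Finset ℕ :=
  (Finset.range (Nat.log 2 z + 1)).biUnion fun t => (col (z / 2 ^ t)).toFinset

section ancestorColors

variable (col : ℕ → Multiset ℕ)

lemma toFinset_subset_ancestorColors (w : ℕ) : (col w).toFinset ⊆ ancestorColors col w := by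
  simpa [ancestorColors] using
    Finset.subset_biUnion_of_mem (fun t => (col (w / 2 ^ t)).toFinset)
      (Finset.mem_range.2 (Nat.succ_pos (Nat.log 2 w)))

lemma ancestorColors_subset_of_div_pow_eq {w z s : ℕ} (hz : z ≠ 0) (h : w / 2 ^ s = z) :
    ancestorColors col z ⊆ ancestorColors col w := by
  have hlog : Nat.log 2 z + s ≤ Nat.log 2 w := by
    rw [← Nat.log_mul_pow one_lt_two hz, ← h]
    exact Nat.log_mono_right (Nat.div_mul_le_self w _)
  intro x hx
  simp only [ancestorColors, Finset.mem_biUnion, Finset.mem_range] at hx ⊢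
  obtain ⟨t, ht, hx⟩ := hx
  refine ⟨s + t, by omega, ?_⟩
  rwa [pow_add, ← Nat.div_div_eq_div_mul, h]

lemma exists_descendant_at_level {z m : ℕ} (hz : z ≠ 0) (h : Nat.log 2 z ≤ m) :
    ∃ v, v ≠ 0 ∧ Nat.log 2 v = m ∧ ancestorColors col z ⊆ ancestorColors col v := by
  refine ⟨z * 2 ^ (m - Nat.log 2 z), by positivity, ?_, ?_⟩
  · rw [Nat.log_mul_pow one_lt_two hz]
    omega
  · exact ancestorColors_subset_of_div_pow_eq col hz (Nat.mul_div_cancel _ (by positivity))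

lemma pathColors_eq_ancestorColors {β l : ℕ} (h : Nat.log 2 l = β) :
    pathColors β col l = ancestorColors col l := by
  rw [pathColors, ancestorColors, h]

lemma exists_mem_ancestorColors_card_succ {W : Finset ℕ} {z k : ℕ} (hz : z ≠ 0)
    (hzW : z ∈ W) (hW : ∀ w ∈ W, ∃ t, w / 2 ^ t = z) (hk : k ≤ (ancestorColors col z).card)
    (hcolors : k + 1 ≤ (W.biUnion fun w => (col w).toFinset).card) :
    ∃ w ∈ W, k + 1 ≤ (ancestorColors col w).card := by
  by_cases hzk : k + 1 ≤ (ancestorColors col z).card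
  · exact ⟨z, hzW, hzk⟩
  have hnew : ¬ (W.biUnion fun w => (col w).toFinset) ⊆ ancestorColors col z :=
    fun hsub => by have := Finset.card_le_card hsub; omega
  obtain ⟨x, hxW, hxz⟩ := Finset.not_subset.1 hnew
  obtain ⟨w, hw, hxw⟩ := Finset.mem_biUnion.1 hxW
  obtain ⟨t, hwt⟩ := hW w hw
  refine ⟨w, hw, ?_⟩
  have hsub : insert x (ancestorColors col z) ⊆ ancestorColors col w :=
    Finset.insert_subset (toFinset_subset_ancestorColors col w hxw)
      (ancestorColors_subset_of_div_pow_eq col hz hwt)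
  calc k + 1 ≤ (insert x (ancestorColors col z)).card := by
        rw [Finset.card_insert_of_notMem hxz]; omega
    _ ≤ _ := Finset.card_le_card hsub

end ancestorColors

lemma exists_colorful_node_at_slice_top {β b : ℕ} {col : ℕ → Multiset ℕ} {e : ℕ → ℕ}
    (he0 : e 0 = 0) (heb : e b = β + 1) (hmono : ∀ i j : ℕ, i < j → j ≤ b → e i < e j)
    (hslice : ∀ i : ℕ, 1 ≤ i → i ≤ b - 1 →
      ∀ z ∈ treeNodes β, Nat.log 2 z = e (i - 1) →
        i ≤ ((((treeNodes β).filter fun w =>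
              (∃ t : ℕ, w / 2 ^ t = z) ∧ Nat.log 2 w < e i).biUnion
                fun w => (col w).toFinset).card)) :
    ∀ i < b, ∃ z, z ≠ 0 ∧ Nat.log 2 z = e i ∧ i ≤ (ancestorColors col z).card := by
  intro i
  induction i with
  | zero => exact fun _ => ⟨1, one_ne_zero, by simp [he0], Nat.zero_le _⟩
  | succ i ih =>
    intro hib
    obtain ⟨z, hz, hzlog, hzcard⟩ := ih (by omega)
    have hlevel : e i < e (i + 1) := hmono i (i + 1) (by omega) (by omega)
    have hzT : z ∈ treeNodes β := by
      have := hmono (i + 1) b (by omega) le_rfl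
      exact mem_treeNodes_of_log_le hz (by omega)
    obtain ⟨w, hw, hwcard⟩ := exists_mem_ancestorColors_card_succ col hz
      (Finset.mem_filter.2 ⟨hzT, ⟨0, by simp⟩, by omega⟩)
      (fun w hw => (Finset.mem_filter.1 hw).2.1) hzcard
      (hslice (i + 1) (by omega) (by omega) z hzT hzlog)
    obtain ⟨-, ⟨t, hwt⟩, hwlog⟩ := Finset.mem_filter.1 hw
    obtain ⟨v, hv, hvlog, hsub⟩ :=
      exists_descendant_at_level col (m := e (i + 1)) (fun h0 => hz (by simp [← hwt, h0]))
        hwlog.le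
    exact ⟨v, hv, hvlog, hwcard.trans (Finset.card_le_card hsub)⟩

/-- building a colorful root-leaf path slice by slice.
Let the levels `0, …, β` of the complete binary tree of height `β` be
partitioned into `b` consecutive slices, the `i`-th slice (for `1 ≤ i ≤ b`)
consisting of levels `e (i-1), …, e i - 1`, where `e 0 = 0`, `e b = β + 1`
and `e` is strictly increasing on `{0, …, b}`.  Suppose that for each
`i ∈ {1, …, b-1}` and each node `z` on the top level of slice `i`, the
complete subtree of descendants of `z` lying inside slice `i` carries at
least `i` distinct colors.  Then some root-leaf path meets at least `b - 1`
distinct colors. -/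
theorem statement7 (β b : ℕ) (hb : 1 ≤ b) (col : ℕ → Multiset ℕ)
    (e : ℕ → ℕ) (he0 : e 0 = 0) (heb : e b = β + 1)
    (hmono : ∀ i j : ℕ, i < j → j ≤ b → e i < e j)
    (hslice : ∀ i : ℕ, 1 ≤ i → i ≤ b - 1 →
      ∀ z ∈ treeNodes β, Nat.log 2 z = e (i - 1) →
        i ≤ ((((treeNodes β).filter fun w =>
              (∃ t : ℕ, w / 2 ^ t = z) ∧ Nat.log 2 w < e i).biUnion
                fun w => (col w).toFinset).card)) :
    ∃ l ∈ treeLeaves β, b - 1 ≤ (pathColors β col l).card := by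
  obtain ⟨z, hz, hzlog, hzcard⟩ :=
    exists_colorful_node_at_slice_top he0 heb hmono hslice (b - 1) (by omega)
  have hleaf_level : Nat.log 2 z ≤ β := by
    have := hmono (b - 1) b (by omega) le_rfl
    omega
  obtain ⟨l, hl, hllog, hsub⟩ := exists_descendant_at_level col hz hleaf_level
  refine ⟨l, mem_treeLeaves_of_log_eq hl hllog, ?_⟩
  rw [pathColors_eq_ancestorColors col hllog]
  exact hzcard.trans (Finset.card_le_card hsub)
end

section
/- There is a constant c > 0 such that the following holds for all integers β ≥ 2 and all integers k ≥ β + 1. Set k' = ⌊k/(β + 1)⌋·(β + 1). Let T be the complete binary tree of height β, and consider any multi-coloring of T such that (i) every non-leaf node is assigned a multiset of exactly k'/(β + 1) colors, (ii) every leaf is assigned a multiset of exactly k'/(β + 1) + (k − k') colors, and (iii) each color class has size at most k (note k ≤ 2k'). Then there exists a root-leaf path of T along which at least c·β/log₂ β distinct colors appear. -/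
open Finset

theorem sum_Ico_mul_div {M : Type*} [AddCommMonoid M] (f : ℕ → M) (n : ℕ)
    {a b : ℕ} (hab : a ≤ b) :
    ∑ l ∈ Ico (a * n) (b * n), f (l / n) = n • ∑ v ∈ Ico a b, f v := by
  induction b, hab using Nat.le_induction with
  | base => simp
  | succ b hab ih =>
    have hblock : ∑ l ∈ Ico (b * n) ((b + 1) * n), f (l / n) = n • f b := by
      rw [sum_congr rfl fun l hl =>
        congrArg f (Nat.div_eq_of_lt_le (mem_Ico.1 hl).1 (mem_Ico.1 hl).2)]
      simp [add_mul]
    rw [← sum_Ico_consecutive _ (Nat.mul_le_mul_right n hab) (Nat.mul_le_mul_right n b.le_succ),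
      ih, hblock, sum_Ico_succ_top hab, smul_add]

theorem div_mem_Ico_of_mem_Ico_mul {a b n l : ℕ} (hn : 0 < n) (hl : l ∈ Ico (a * n) (b * n)) :
    l / n ∈ Ico a b := by
  rw [mem_Ico] at hl ⊢
  exact ⟨(Nat.le_div_iff_mul_le hn).2 hl.1, (Nat.div_lt_iff_lt_mul hn).2 hl.2⟩

theorem sum_range_sum_Ico_two_pow {M : Type*} [AddCommMonoid M] (f : ℕ → M) (n : ℕ) :
    ∑ j ∈ range n, ∑ w ∈ Ico (2 ^ j) (2 ^ (j + 1)), f w = ∑ w ∈ Ico 1 (2 ^ n), f w := by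
  induction n with
  | zero => simp
  | succ n ih =>
    rw [sum_range_succ, ih,
      sum_Ico_consecutive _ Nat.one_le_two_pow (Nat.pow_le_pow_right two_pos n.le_succ)]

theorem treeLeaves_eq_Ico_mul {β t : ℕ} (ht : t ≤ β) :
    treeLeaves β = Ico (2 ^ (β - t) * 2 ^ t) (2 ^ (β - t + 1) * 2 ^ t) := by
  simp only [treeLeaves, ← pow_add]
  congr 2 <;> omega

theorem sum_treeLeaves_div_pow {M : Type*} [AddCommMonoid M] (f : ℕ → M) {β t : ℕ}
    (ht : t ≤ β) :
    ∑ l ∈ treeLeaves β, f (l / 2 ^ t) =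
      2 ^ t • ∑ w ∈ Ico (2 ^ (β - t)) (2 ^ (β - t + 1)), f w := by
  rw [treeLeaves_eq_Ico_mul ht]
  exact sum_Ico_mul_div f _ (Nat.pow_le_pow_right two_pos (by omega))

theorem sum_Ico_sum_Ico_two_pow_sub_eq {M : Type*} [AddCommMonoid M] (f : ℕ → M) (β : ℕ) :
    ∑ t ∈ Ico 1 (β + 1), ∑ w ∈ Ico (2 ^ (β - t)) (2 ^ (β - t + 1)), f w =
      ∑ w ∈ Ico 1 (2 ^ β), f w := by
  rw [sum_Ico_reflect (fun j => ∑ w ∈ Ico (2 ^ j) (2 ^ (j + 1)), f w) 1 le_rfl,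
    ← sum_range_sum_Ico_two_pow, Nat.add_sub_cancel, Nat.sub_self, range_eq_Ico]

theorem div_two_pow_mem_Ico {β t l : ℕ} (ht : t ≤ β) (hl : l ∈ treeLeaves β) :
    l / 2 ^ t ∈ Ico (2 ^ (β - t)) (2 ^ (β - t + 1)) :=
  div_mem_Ico_of_mem_Ico_mul (by positivity) (treeLeaves_eq_Ico_mul ht ▸ hl)

theorem div_two_pow_mem_Ico_one {β t l : ℕ} (ht : t ∈ Ico 1 (β + 1)) (hl : l ∈ treeLeaves β) :
    l / 2 ^ t ∈ Ico 1 (2 ^ β) := by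
  rw [mem_Ico] at ht
  refine Ico_subset_Ico Nat.one_le_two_pow (Nat.pow_le_pow_right two_pos (by omega))
    (div_two_pow_mem_Ico (by omega) hl)

theorem card_filter_treeLeaves_div_pow_eq {β t l₀ : ℕ} (ht : t ≤ β) (hl₀ : l₀ ∈ treeLeaves β) :
    #{l ∈ treeLeaves β | l / 2 ^ t = l₀ / 2 ^ t} = 2 ^ t := by
  rw [card_filter, sum_treeLeaves_div_pow (fun w => if w = l₀ / 2 ^ t then 1 else 0) ht,
    sum_ite_eq', if_pos (div_two_pow_mem_Ico ht hl₀), smul_eq_mul, mul_one]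

section LeafSums

variable {β m t₀ : ℕ} {c : ℕ → ℕ}

theorem sum_Ico_sum_treeLeaves_le_mul_two_pow {H : ℕ} (hH : H ≤ β)
    (htot : ∑ w ∈ Ico 1 (2 ^ β), c w ≤ m * 2 ^ t₀) :
    ∑ t ∈ Ico 1 (H - t₀ + 1), ∑ l ∈ treeLeaves β, c (l / 2 ^ t) ≤ m * 2 ^ H := by
  set N : ℕ → ℕ := fun t => ∑ w ∈ Ico (2 ^ (β - t)) (2 ^ (β - t + 1)), c w
  have hstep : ∀ t ∈ Ico 1 (H - t₀ + 1),
      2 ^ t₀ * ∑ l ∈ treeLeaves β, c (l / 2 ^ t) ≤ 2 ^ H * N t := by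
    intro t ht
    rw [mem_Ico] at ht
    rw [sum_treeLeaves_div_pow c (by omega), smul_eq_mul, ← mul_assoc, ← pow_add]
    exact Nat.mul_le_mul_right _ (Nat.pow_le_pow_right two_pos (by omega))
  have hN_sum : ∑ t ∈ Ico 1 (H - t₀ + 1), N t ≤ ∑ w ∈ Ico 1 (2 ^ β), c w :=
    sum_Ico_sum_Ico_two_pow_sub_eq c β ▸ sum_le_sum_of_subset (Ico_subset_Ico_right (by omega))
  refine Nat.le_of_mul_le_mul_left ?_ (show 0 < 2 ^ t₀ by positivity)
  calc 2 ^ t₀ * ∑ t ∈ Ico 1 (H - t₀ + 1), ∑ l ∈ treeLeaves β, c (l / 2 ^ t)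
      ≤ 2 ^ H * ∑ t ∈ Ico 1 (H - t₀ + 1), N t := by
        rw [mul_sum, mul_sum]; exact sum_le_sum hstep
    _ ≤ 2 ^ H * (m * 2 ^ t₀) := Nat.mul_le_mul_left _ (hN_sum.trans htot)
    _ = 2 ^ t₀ * (m * 2 ^ H) := by ring

theorem sum_treeLeaves_div_pow_le_mul_card (hc : ∀ w ∈ Ico 1 (2 ^ β), c w ≤ m) {t : ℕ}
    (ht : t ∈ Ico 1 (β + 1)) :
    ∑ l ∈ treeLeaves β, c (l / 2 ^ t) ≤
      m * #{l ∈ treeLeaves β | 0 < ∑ t ∈ Ico 1 (β + 1), c (l / 2 ^ t)} := by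
  set hit := {l ∈ treeLeaves β | 0 < ∑ t ∈ Ico 1 (β + 1), c (l / 2 ^ t)}
  calc ∑ l ∈ treeLeaves β, c (l / 2 ^ t) = ∑ l ∈ hit, c (l / 2 ^ t) := by
        refine (sum_subset (filter_subset _ _) fun l hl hl' => ?_).symm
        by_contra hne
        exact hl' (mem_filter.2 ⟨hl, sum_pos_iff.2 ⟨t, ht, Nat.pos_of_ne_zero hne⟩⟩)
    _ ≤ #hit • m := sum_le_card_nsmul _ _ _ fun l hl =>
        hc _ (div_two_pow_mem_Ico_one ht (mem_filter.1 hl).1)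
    _ = m * #hit := by rw [smul_eq_mul, mul_comm]

theorem sum_treeLeaves_sum_Ico_le
    (hc : ∀ w ∈ Ico 1 (2 ^ β), c w ≤ m) (htot : ∑ w ∈ Ico 1 (2 ^ β), c w ≤ m * 2 ^ t₀) :
    ∑ l ∈ treeLeaves β, ∑ t ∈ Ico 1 (β + 1), c (l / 2 ^ t) ≤
      m * (t₀ + 1) * #{l ∈ treeLeaves β | 0 < ∑ t ∈ Ico 1 (β + 1), c (l / 2 ^ t)} := by
  set hit := {l ∈ treeLeaves β | 0 < ∑ t ∈ Ico 1 (β + 1), c (l / 2 ^ t)}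
  set S : ℕ → ℕ := fun t => ∑ l ∈ treeLeaves β, c (l / 2 ^ t)
  set H := Nat.findGreatest (fun t => 0 < S t) β
  have hHβ : H ≤ β := Nat.findGreatest_le β
  have hS_top : ∑ t ∈ Ico (H + 1) (β + 1), S t = 0 :=
    sum_eq_zero fun t ht => Nat.eq_zero_of_not_pos
      (Nat.findGreatest_is_greatest (P := fun t => 0 < S t) (n := β)
        (by simp at ht; omega) (by simp at ht; omega))
  rw [sum_comm, ← sum_Ico_consecutive S (by omega : 1 ≤ H + 1) (by omega), hS_top, add_zero]
  rcases Nat.eq_zero_or_pos H with hH0 | hHpos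
  · simp [hH0]
  obtain ⟨l₀, hl₀, hl₀pos⟩ := sum_pos_iff.1
    (Nat.findGreatest_of_ne_zero (P := fun t => 0 < S t) rfl hHpos.ne')
  have hH_le_hit : 2 ^ H ≤ #hit := by
    rw [← card_filter_treeLeaves_div_pow_eq hHβ hl₀]
    refine card_le_card (monotone_filter_right _ fun l _ hl => ?_)
    exact sum_pos_iff.2 ⟨H, by simp; omega, by rwa [hl]⟩
  have hshallow : ∑ t ∈ Ico (H - t₀ + 1) (H + 1), S t ≤ t₀ * (m * #hit) := by
    refine (sum_le_card_nsmul _ _ _ fun t ht => sum_treeLeaves_div_pow_le_mul_card hc ?_).trans ?_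
    · simp at ht ⊢; omega
    · rw [Nat.card_Ico, smul_eq_mul]; exact Nat.mul_le_mul_right _ (by omega)
  calc ∑ t ∈ Ico 1 (H + 1), S t
      = ∑ t ∈ Ico 1 (H - t₀ + 1), S t + ∑ t ∈ Ico (H - t₀ + 1) (H + 1), S t :=
        (sum_Ico_consecutive S (by omega) (by omega)).symm
    _ ≤ m * #hit + t₀ * (m * #hit) :=
        add_le_add ((sum_Ico_sum_treeLeaves_le_mul_two_pow hHβ htot).trans
          (Nat.mul_le_mul_left m hH_le_hit)) hshallow
    _ = m * (t₀ + 1) * #hit := by ring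

end LeafSums

theorem card_treeLeaves (β : ℕ) : #(treeLeaves β) = 2 ^ β := by
  rw [treeLeaves, Nat.card_Ico, pow_succ]
  omega

theorem pow_mul_mul_le_sum_card_pathColors {β m t₀ : ℕ} {col : ℕ → Multiset ℕ}
    (hcard : ∀ v ∈ Ico 1 (2 ^ β), Multiset.card (col v) = m)
    (hcap : ∀ x, ∑ v ∈ Ico 1 (2 ^ β), (col v).count x ≤ m * 2 ^ t₀) :
    2 ^ β * (β * m) ≤ m * (t₀ + 1) * ∑ l ∈ treeLeaves β, #(pathColors β col l) := by
  classical
  set X := (Ico 1 (2 ^ β)).biUnion fun v => (col v).toFinset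
  set N : ℕ → ℕ → ℕ := fun x l => ∑ t ∈ Ico 1 (β + 1), (col (l / 2 ^ t)).count x
  have hleaf : ∀ l ∈ treeLeaves β, ∑ x ∈ X, N x l = β * m := by
    intro l hl
    have hcount : ∀ t ∈ Ico 1 (β + 1), ∑ x ∈ X, (col (l / 2 ^ t)).count x = m := fun t ht =>
      have hw := div_two_pow_mem_Ico_one ht hl
      (Multiset.sum_count_eq_card fun x hx =>
        mem_biUnion.2 ⟨_, hw, Multiset.mem_toFinset.2 hx⟩).trans (hcard _ hw)
    rw [sum_comm, sum_congr rfl hcount]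
    simp
  have hcolor : ∀ x ∈ X, ∑ l ∈ treeLeaves β, N x l ≤
      m * (t₀ + 1) * #{l ∈ treeLeaves β | x ∈ pathColors β col l} := by
    intro x _
    refine (sum_treeLeaves_sum_Ico_le (fun w hw => hcard w hw ▸ Multiset.count_le_card x (col w))
      (hcap x)).trans (Nat.mul_le_mul_left _ (card_le_card (monotone_filter_right _ ?_)))
    intro l _ hl
    obtain ⟨t, ht, hpos⟩ := sum_pos_iff.1 hl
    exact mem_biUnion.2
      ⟨t, by simp at ht ⊢; omega, Multiset.mem_toFinset.2 (Multiset.count_pos.1 hpos)⟩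
  calc 2 ^ β * (β * m) = ∑ l ∈ treeLeaves β, ∑ x ∈ X, N x l := by
        rw [sum_congr rfl hleaf, sum_const, card_treeLeaves, smul_eq_mul]
    _ = ∑ x ∈ X, ∑ l ∈ treeLeaves β, N x l := sum_comm
    _ ≤ ∑ x ∈ X, m * (t₀ + 1) * #{l ∈ treeLeaves β | x ∈ pathColors β col l} := sum_le_sum hcolor
    _ = m * (t₀ + 1) * ∑ l ∈ treeLeaves β, #{x ∈ X | x ∈ pathColors β col l} := by
        rw [← mul_sum]
        exact congrArg _ (sum_card_bipartiteAbove_eq_sum_card_bipartiteBelow _)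
    _ ≤ m * (t₀ + 1) * ∑ l ∈ treeLeaves β, #(pathColors β col l) :=
        Nat.mul_le_mul_left _ (sum_le_sum fun l _ => card_le_card fun x hx => (mem_filter.1 hx).2)

theorem exists_treeLeaves_le_mul_card_pathColors {β m t₀ : ℕ} (hm : 0 < m) {col : ℕ → Multiset ℕ}
    (hcard : ∀ v ∈ Ico 1 (2 ^ β), Multiset.card (col v) = m)
    (hcap : ∀ x, ∑ v ∈ Ico 1 (2 ^ β), (col v).count x ≤ m * 2 ^ t₀) :
    ∃ l ∈ treeLeaves β, β ≤ (t₀ + 1) * #(pathColors β col l) := by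
  refine exists_le_of_sum_le ⟨2 ^ β, by simp [treeLeaves, pow_succ]⟩ ?_
  rw [sum_const, card_treeLeaves, smul_eq_mul, ← mul_sum]
  refine Nat.le_of_mul_le_mul_left ?_ hm
  calc m * (2 ^ β * β) = 2 ^ β * (β * m) := by ring
    _ ≤ m * (t₀ + 1) * ∑ l ∈ treeLeaves β, #(pathColors β col l) :=
        pow_mul_mul_le_sum_card_pathColors hcard hcap
    _ = _ := by ring

theorem le_div_mul_two_pow_log_add_two {β k : ℕ} (hk : β + 1 ≤ k) :
    k ≤ k / (β + 1) * 2 ^ (Nat.log 2 β + 2) := by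
  have hdiv := Nat.lt_div_mul_add (a := k) (Nat.succ_pos β)
  have hm : 1 ≤ k / (β + 1) := (Nat.one_le_div_iff (Nat.succ_pos β)).2 hk
  have hlog : β + 1 ≤ 2 ^ (Nat.log 2 β + 1) := Nat.lt_pow_succ_log_self one_lt_two β
  rw [pow_succ]
  nlinarith

theorem div_logb_le_of_le_mul {β n : ℕ} (hβ : 2 ≤ β) (h : β ≤ (Nat.log 2 β + 3) * n) :
    1 / 4 * (β : ℝ) / Real.logb 2 β ≤ n := by
  have hlog : 1 ≤ Nat.log 2 β := Nat.log_pos one_lt_two hβ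
  have hlogb : (Nat.log 2 β : ℝ) ≤ Real.logb 2 β := by exact_mod_cast Real.natLog_le_logb β 2
  have hlog' : (1 : ℝ) ≤ Nat.log 2 β := by exact_mod_cast hlog
  have h' : (β : ℝ) ≤ (Nat.log 2 β + 3) * n := by exact_mod_cast h
  rw [div_le_iff₀ (by linarith)]
  nlinarith [(n.cast_nonneg : (0 : ℝ) ≤ n)]

/-- lower bound for tree multi-colorings, general `k`.
There is a constant `c > 0` such that for every `β ≥ 2` and `k ≥ β + 1`,
setting `k' = ⌊k/(β+1)⌋·(β+1)`, every multi-coloring of the complete binary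
tree of height `β` in which every non-leaf node carries exactly `k'/(β+1)`
colors, every leaf carries exactly `k'/(β+1) + (k - k')` colors, and every
color class has size at most `k`, admits a root-leaf path along which at
least `c · β / log₂ β` distinct colors appear.
(The non-leaf nodes are `1, …, 2^β - 1`; note that `k'/(β+1) = ⌊k/(β+1)⌋`.) -/
theorem statement10 :
    ∃ c : ℝ, 0 < c ∧
      ∀ β k : ℕ, 2 ≤ β → β + 1 ≤ k →
        ∀ col : ℕ → Multiset ℕ,
          (∀ v ∈ Finset.Ico 1 (2 ^ β),
            Multiset.card (col v) = k / (β + 1) * (β + 1) / (β + 1)) →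
          (∀ v ∈ treeLeaves β,
            Multiset.card (col v) =
              k / (β + 1) * (β + 1) / (β + 1) + (k - k / (β + 1) * (β + 1))) →
          (∀ x : ℕ, (∑ v ∈ treeNodes β, (col v).count x) ≤ k) →
          ∃ l ∈ treeLeaves β,
            c * (β : ℝ) / Real.logb 2 (β : ℝ) ≤ ((pathColors β col l).card : ℝ) := by
  refine ⟨1 / 4, by norm_num, fun β k hβ hk col hcard _ hcap => ?_⟩
  rw [Nat.mul_div_cancel _ (Nat.succ_pos β)] at hcard
  have hinternal : Ico 1 (2 ^ β) ⊆ treeNodes β :=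
    Ico_subset_Ico_right (Nat.pow_le_pow_right two_pos β.le_succ)
  have hcap' : ∀ x, ∑ v ∈ Ico 1 (2 ^ β), (col v).count x ≤
      k / (β + 1) * 2 ^ (Nat.log 2 β + 2) := fun x =>
    (sum_le_sum_of_subset hinternal).trans ((hcap x).trans (le_div_mul_two_pow_log_add_two hk))
  obtain ⟨l, hl, hβl⟩ :=
    exists_treeLeaves_le_mul_card_pathColors (Nat.div_pos hk (Nat.succ_pos β)) hcard hcap'
  exact ⟨l, hl, div_logb_le_of_le_mul hβ hβl⟩
end
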